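/- (Theorem 1.) Let K be a real n×n positive semidefinite matrix with positive semidefinite square root K^{1/2}, let P be any real n×m matrix with m ≥ r, and set C = KP and W = PᵀKP; assume W is invertible. Let K^{1/2}P = F S Nᵀ be a singular value decomposition with F n×m having orthonormal columns, N m×m orthogonal, and S m×m diagonal with positive nonincreasing diagonal entries; write N_r for the first r columns of N and S_r for the leading r×r block of S. Define the standard Nyström rank-r approximation G_nys = C (N_r S_r^{-2} N_rᵀ) Cᵀ, and let G_opt be any real n×n matrix with rank(G_opt) ≤ r minimizing ‖CW⁻¹Cᵀ − G‖_F over all n×n matrices G of rank at most r. Then K − G_opt and K − G_nys are both positive semidefinite, and trace(K − G_opt) ≤ trace(K − G_nys); equivalently, ‖K − G_opt‖_* ≤ ‖K − G_nys‖_* in the trace norm. -/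

import Mathlib

open Matrix

/-- Frobenius norm of a real matrix: ‖A‖_F = sqrt(trace(Aᵀ A)). -/
noncomputable def frobNorm {α β : Type*} [Fintype α] [Fintype β] (A : Matrix α β ℝ) : ℝ :=
  Real.sqrt (Matrix.trace (Aᵀ * A))

/-- The square root of a positive semidefinite matrix, as `Matrix.PosSemidef.sqrt` was defined
in the older Mathlib (since removed). -/
noncomputable def Matrix.PosSemidef.sqrt {n : Type*} [Fintype n] [DecidableEq n]
    {A : Matrix n n ℝ} (hA : A.PosSemidef) : Matrix n n ℝ :=
  hA.1.eigenvectorUnitary.1 * diagonal ((↑) ∘ Real.sqrt ∘ hA.1.eigenvalues) *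
    (star hA.1.eigenvectorUnitary : Matrix n n ℝ)

lemma psqrt_psd {n : Type*} [Fintype n] [DecidableEq n] {A : Matrix n n ℝ}
    (hA : A.PosSemidef) : hA.sqrt.PosSemidef := by
  unfold Matrix.PosSemidef.sqrt
  have hd : (diagonal ((↑) ∘ Real.sqrt ∘ hA.1.eigenvalues) : Matrix n n ℝ).PosSemidef :=
    PosSemidef.diagonal (fun i => by simp [Real.sqrt_nonneg])
  have := hd.mul_mul_conjTranspose_same (hA.1.eigenvectorUnitary : Matrix n n ℝ)
  simpa [Matrix.star_eq_conjTranspose] using this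

lemma psqrt_mul_self {n : Type*} [Fintype n] [DecidableEq n] {A : Matrix n n ℝ}
    (hA : A.PosSemidef) : hA.sqrt * hA.sqrt = A := by
  unfold Matrix.PosSemidef.sqrt
  set U := hA.1.eigenvectorUnitary
  have hU : (star U : Matrix n n ℝ) * U = 1 := Unitary.coe_star_mul_self U
  conv_rhs => rw [hA.1.spectral_theorem, Unitary.conjStarAlgAut_apply]
  calc (U : Matrix n n ℝ) * diagonal ((↑) ∘ Real.sqrt ∘ hA.1.eigenvalues) * (star U : Matrix n n ℝ)
        * ((U : Matrix n n ℝ) * diagonal ((↑) ∘ Real.sqrt ∘ hA.1.eigenvalues) * (star U : Matrix n n ℝ))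
      = (U : Matrix n n ℝ) * (diagonal ((↑) ∘ Real.sqrt ∘ hA.1.eigenvalues) * ((star U : Matrix n n ℝ) * (U : Matrix n n ℝ))
        * diagonal ((↑) ∘ Real.sqrt ∘ hA.1.eigenvalues)) * (star U : Matrix n n ℝ) := by
        simp only [Matrix.mul_assoc]
    _ = _ := by
        rw [hU, Matrix.mul_one, diagonal_mul_diagonal]
        congr 3
        funext i
        simp [Real.mul_self_sqrt (hA.eigenvalues_nonneg i)]

set_option maxHeartbeats 1000000


noncomputable def frobSq {α β : Type*} [Fintype α] [Fintype β] (A : Matrix α β ℝ) : ℝ :=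
  Matrix.trace (Aᵀ * A)

lemma frobSq_eq_sum {α β : Type*} [Fintype α] [Fintype β] (A : Matrix α β ℝ) :
    frobSq A = ∑ j, ∑ i, A i j ^ 2 := by
  simp [frobSq, Matrix.trace, Matrix.diag, Matrix.mul_apply, sq]

lemma frobSq_nonneg {α β : Type*} [Fintype α] [Fintype β] (A : Matrix α β ℝ) : 0 ≤ frobSq A := by
  rw [frobSq_eq_sum]
  exact Finset.sum_nonneg fun j _ => Finset.sum_nonneg fun i _ => sq_nonneg _

lemma eq_zero_of_frobSq_le_zero {α β : Type*} [Fintype α] [Fintype β] {A : Matrix α β ℝ}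
    (h : frobSq A ≤ 0) : A = 0 := by
  have h0 : frobSq A = 0 := le_antisymm h (frobSq_nonneg A)
  rw [frobSq_eq_sum] at h0
  ext i j
  have h1 := (Finset.sum_eq_zero_iff_of_nonneg (fun j _ => Finset.sum_nonneg fun i _ => sq_nonneg _)).mp h0 j (Finset.mem_univ _)
  have h2 := (Finset.sum_eq_zero_iff_of_nonneg (fun i _ => sq_nonneg _)).mp h1 i (Finset.mem_univ _)
  simpa using pow_eq_zero_iff (n := 2) (by norm_num) |>.mp h2

lemma frobNorm_eq_sqrt {α β : Type*} [Fintype α] [Fintype β] (A : Matrix α β ℝ) :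
    frobNorm A = Real.sqrt (frobSq A) := rfl

lemma frobSq_le_of_frobNorm_le {α β : Type*} [Fintype α] [Fintype β] {A B : Matrix α β ℝ}
    (h : frobNorm A ≤ frobNorm B) : frobSq A ≤ frobSq B := by
  have := Real.sqrt_le_sqrt (le_of_eq (rfl : frobSq A = frobSq A))
  have h2 : Real.sqrt (frobSq A) ≤ Real.sqrt (frobSq B) := h
  nlinarith [Real.sq_sqrt (frobSq_nonneg A), Real.sq_sqrt (frobSq_nonneg B),
    Real.sqrt_nonneg (frobSq A), Real.sqrt_nonneg (frobSq B)]


lemma exists_proj {n r : ℕ} (G : Matrix (Fin n) (Fin n) ℝ) (hG : G.rank ≤ r) :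
    ∃ (P : Matrix (Fin n) (Fin n) ℝ) (p : ℕ), Pᵀ = P ∧ P * P = P ∧ P * G = G ∧
      p ≤ r ∧ p ≤ n ∧ Matrix.trace P = (p : ℝ) := by
  classical
  set L := (WithLp.linearEquiv 2 ℝ (Fin n → ℝ)).symm with hL
  set U : Submodule ℝ (EuclideanSpace ℝ (Fin n)) :=
    (LinearMap.range G.mulVecLin).map (L : (Fin n → ℝ) →ₗ[ℝ] EuclideanSpace ℝ (Fin n)) with hU
  set p := Module.finrank ℝ U with hp
  have hpG : p = G.rank := by
    rw [hp, hU, LinearEquiv.finrank_map_eq]; rfl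
  set b := stdOrthonormalBasis ℝ U with hb
  set u : Fin p → EuclideanSpace ℝ (Fin n) := fun j => (b j : EuclideanSpace ℝ (Fin n)) with hu
  have horth : ∀ j k, (∑ i, u j i * u k i) = if j = k then (1:ℝ) else 0 := by
    intro j k
    have h1 : (inner ℝ (u j) (u k) : ℝ) = ∑ i, u j i * u k i := by
      simp [PiLp.inner_apply, RCLike.inner_apply, u]
      exact Finset.sum_congr rfl fun _ _ => mul_comm _ _
    have h2 : (inner ℝ (b j) (b k) : ℝ) = if j = k then 1 else 0 := by
      rcases eq_or_ne j k with h | h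
      · subst h; simp [inner_self_eq_norm_sq_to_K, b.orthonormal.1 j]
      · simp [h, b.orthonormal.2 h]
    rw [← h1, ← Submodule.coe_inner, h2]
  set P : Matrix (Fin n) (Fin n) ℝ := Matrix.of fun i k => ∑ j, u j i * u j k with hP
  have hsym : Pᵀ = P := by
    ext i k; simp only [Matrix.transpose_apply, hP, Matrix.of_apply]
    exact Finset.sum_congr rfl fun j _ => mul_comm _ _
  have inner_step : ∀ j k, (∑ l, u j l * P l k) = u j k := by
    intro j k
    have h1 : ∀ l, u j l * P l k = ∑ j', u j l * u j' l * u j' k := by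
      intro l
      simp only [hP, Matrix.of_apply, Finset.mul_sum]
      exact Finset.sum_congr rfl fun _ _ => by ring
    rw [Finset.sum_congr rfl (fun l _ => h1 l), Finset.sum_comm]
    have h2 : ∀ j', (∑ l, u j l * u j' l * u j' k) = (if j = j' then (1:ℝ) else 0) * u j' k := by
      intro j'; rw [← Finset.sum_mul, horth]
    rw [Finset.sum_congr rfl (fun j' _ => h2 j')]
    simp
  have hidem : P * P = P := by
    ext i k
    show (P * P) i k = P i k
    rw [Matrix.mul_apply]
    calc (∑ l, P i l * P l k) = ∑ l, ∑ j, u j i * (u j l * P l k) := by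
          refine Finset.sum_congr rfl fun l _ => ?_
          have : P i l = ∑ j, u j i * u j l := rfl
          rw [this, Finset.sum_mul]
          exact Finset.sum_congr rfl fun j _ => by ring
      _ = ∑ j, ∑ l, u j i * (u j l * P l k) := Finset.sum_comm
      _ = ∑ j, u j i * u j k := by
          refine Finset.sum_congr rfl fun j _ => ?_
          rw [← Finset.mul_sum, inner_step]
      _ = P i k := rfl
  have hfix : ∀ x : Fin n → ℝ, x ∈ LinearMap.range G.mulVecLin → P *ᵥ x = x := by
    intro x hx
    have hxU : L x ∈ U := Submodule.mem_map_of_mem hx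
    set y : U := ⟨L x, hxU⟩ with hy
    have hrepr := b.sum_repr y
    have happ : ∀ i, (∑ j, b.repr y j • b j : U).val i = x i := by
      intro i; rw [hrepr]; rfl
    funext i
    have : (P *ᵥ x) i = ∑ j, (b.repr y j) * u j i := by
      simp only [Matrix.mulVec, dotProduct, hP, Matrix.of_apply, Finset.sum_mul]
      rw [Finset.sum_comm]
      refine Finset.sum_congr rfl fun j _ => ?_
      have : b.repr y j = inner ℝ (b j) y := b.repr_apply_apply y j
      rw [this, Submodule.coe_inner]
      have : (inner ℝ ((b j : EuclideanSpace ℝ (Fin n))) ((y : EuclideanSpace ℝ (Fin n))) : ℝ)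
          = ∑ k, u j k * x k := by
        simp [PiLp.inner_apply, RCLike.inner_apply, u, hy]
        exact Finset.sum_congr rfl fun _ _ => mul_comm _ _
      rw [this, Finset.sum_mul]
      exact Finset.sum_congr rfl fun k _ => by ring
    rw [this, ← happ i]
    have : (∑ j, b.repr y j • b j : U).val = ∑ j, b.repr y j • u j := by
      push_cast [hu]
      norm_cast
    rw [this]
    set ev : EuclideanSpace ℝ (Fin n) →ₗ[ℝ] ℝ :=
      (LinearMap.proj i).comp (WithLp.linearEquiv 2 ℝ (Fin n → ℝ) : EuclideanSpace ℝ (Fin n) →ₗ[ℝ] (Fin n → ℝ)) with hev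
    have hev_apply : ∀ v : EuclideanSpace ℝ (Fin n), ev v = v i := fun v => rfl
    rw [show (∑ j, b.repr y j • u j) i = ev (∑ j, b.repr y j • u j) from rfl, map_sum]
    refine Finset.sum_congr rfl fun j _ => ?_
    rw [_root_.map_smul, hev_apply]
    simp
  have hPG : P * G = G := by
    ext i k
    have : (fun i' => G i' k) ∈ LinearMap.range G.mulVecLin := by
      refine ⟨Pi.single k 1, ?_⟩
      simp [Matrix.mulVecLin_apply, Matrix.mulVec_single, Matrix.col_apply']
    have h2 := congrFun (hfix _ this) i
    simpa [Matrix.mul_apply, Matrix.mulVec, dotProduct] using h2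
  have htr : Matrix.trace P = (p : ℝ) := by
    rw [Matrix.trace]
    simp only [Matrix.diag, hP, Matrix.of_apply]
    rw [Finset.sum_comm]
    have : ∀ j, (∑ i, u j i * u j i) = (1:ℝ) := fun j => by rw [horth j j]; simp
    simp [this]
  have hpr : p ≤ r := hpG ▸ hG
  have hpn : p ≤ n := by
    have := Submodule.finrank_le U
    simpa [finrank_euclideanSpace] using this
  exact ⟨P, p, hsym, hidem, hPG, hpr, hpn, htr⟩

section ProjFacts
variable {n : ℕ}

lemma proj_psd {P : Matrix (Fin n) (Fin n) ℝ} (hsym : Pᵀ = P) (hidem : P * P = P) :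
    P.PosSemidef := by
  have : P = Pᴴ * P := by
    show P = Pᵀ * P
    rw [hsym, hidem]
  rw [this]
  exact Matrix.posSemidef_conjTranspose_mul_self P

lemma psd_diag_nonneg {A : Matrix (Fin n) (Fin n) ℝ} (hA : A.PosSemidef) (i : Fin n) :
    0 ≤ A i i := by
  have := hA.dotProduct_mulVec_nonneg (Pi.single i 1)
  simpa [dotProduct, Matrix.mulVec, Pi.single_apply] using this

lemma psd_trace_nonneg {A : Matrix (Fin n) (Fin n) ℝ} (hA : A.PosSemidef) :
    0 ≤ Matrix.trace A :=
  Finset.sum_nonneg fun i _ => psd_diag_nonneg hA i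

lemma proj_compl {P : Matrix (Fin n) (Fin n) ℝ} (hsym : Pᵀ = P) (hidem : P * P = P) :
    (1 - P)ᵀ = 1 - P ∧ (1 - P) * (1 - P) = 1 - P := by
  constructor
  · rw [Matrix.transpose_sub, Matrix.transpose_one, hsym]
  · rw [Matrix.sub_mul, Matrix.mul_sub, Matrix.mul_sub, hidem]
    simp

lemma proj_diag_le_one {P : Matrix (Fin n) (Fin n) ℝ} (hsym : Pᵀ = P) (hidem : P * P = P)
    (i : Fin n) : P i i ≤ 1 := by
  obtain ⟨h1, h2⟩ := proj_compl hsym hidem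
  have := psd_diag_nonneg (proj_psd h1 h2) i
  have h3 : (1 - P) i i = 1 - P i i := by simp [Matrix.sub_apply, Matrix.one_apply]
  rw [h3] at this
  linarith

lemma proj_col_zero {P : Matrix (Fin n) (Fin n) ℝ} (hsym : Pᵀ = P) (hidem : P * P = P)
    {i : Fin n} (h : P i i = 0) (k : Fin n) : P k i = 0 := by
  have hsum : ∑ l, P k l * P l i = P k i := by
    have := congrFun (congrFun hidem k) i
    simpa [Matrix.mul_apply] using this
  have hsym' : ∀ a b, P a b = P b a := fun a b => (congrFun (congrFun hsym b) a : _)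
  have hPP : (P * P) i i = ∑ l, P l i ^ 2 := by
    rw [Matrix.mul_apply]
    refine Finset.sum_congr rfl fun l _ => ?_
    rw [hsym' i l, sq]
  have h0 : ∑ l, P l i ^ 2 = 0 := by rw [← hPP, hidem, h]
  have := (Finset.sum_eq_zero_iff_of_nonneg (fun l _ => sq_nonneg (P l i))).mp h0 k
    (Finset.mem_univ k)
  exact pow_eq_zero_iff two_ne_zero |>.mp this

end ProjFacts

section LP
variable {n : ℕ}

lemma lp_max (a : Fin n → ℝ) (T : Finset (Fin n)) (θ : ℝ) (hθ0 : 0 ≤ θ)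
    (hθT : ∀ i ∈ T, θ ≤ a i) (hθc : ∀ j ∉ T, a j ≤ θ)
    (t : Fin n → ℝ) (ht0 : ∀ i, 0 ≤ t i) (ht1 : ∀ i, t i ≤ 1)
    (hts : ∑ i, t i ≤ (T.card : ℝ)) :
    ∑ i, a i * t i ≤ ∑ i ∈ T, a i := by
  have hsplit : ∑ i, a i * t i = ∑ i ∈ T, a i * t i + ∑ i ∈ Tᶜ, a i * t i :=
    (Finset.sum_add_sum_compl T _).symm
  have htsplit : ∑ i, t i = ∑ i ∈ T, t i + ∑ i ∈ Tᶜ, t i :=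
    (Finset.sum_add_sum_compl T _).symm
  have h1 : ∑ i ∈ Tᶜ, a i * t i ≤ θ * ∑ i ∈ Tᶜ, t i := by
    rw [Finset.mul_sum]
    refine Finset.sum_le_sum fun i hi => ?_
    have hiT : i ∉ T := by simpa using hi
    exact mul_le_mul_of_nonneg_right (hθc i hiT) (ht0 i)
  have h2 : θ * ∑ i ∈ Tᶜ, t i ≤ θ * ((T.card : ℝ) - ∑ i ∈ T, t i) := by
    apply mul_le_mul_of_nonneg_left _ hθ0
    linarith
  have h3 : (T.card : ℝ) - ∑ i ∈ T, t i = ∑ i ∈ T, (1 - t i) := by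
    rw [Finset.sum_sub_distrib, Finset.sum_const, nsmul_eq_mul, mul_one]
  have h4 : ∑ i ∈ T, (a i * t i + θ * (1 - t i)) ≤ ∑ i ∈ T, a i := by
    refine Finset.sum_le_sum fun i hi => ?_
    have := hθT i hi
    have := ht1 i
    nlinarith
  calc ∑ i, a i * t i = ∑ i ∈ T, a i * t i + ∑ i ∈ Tᶜ, a i * t i := hsplit
    _ ≤ ∑ i ∈ T, a i * t i + θ * ((T.card : ℝ) - ∑ i ∈ T, t i) := by linarith
    _ = ∑ i ∈ T, (a i * t i + θ * (1 - t i)) := by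
        rw [h3, Finset.mul_sum, ← Finset.sum_add_distrib]
    _ ≤ ∑ i ∈ T, a i := h4

lemma eq_conditions (μ : Fin n → ℝ) (hμ : ∀ i, 0 ≤ μ i) (T : Finset (Fin n)) (θ : ℝ)
    (hθ0 : 0 ≤ θ) (hθT : ∀ i ∈ T, θ ≤ μ i) (hθc : ∀ j ∉ T, μ j ≤ θ)
    (t : Fin n → ℝ) (ht0 : ∀ i, 0 ≤ t i) (ht1 : ∀ i, t i ≤ 1)
    (hts : ∑ i, t i ≤ (T.card : ℝ))
    (heq : ∑ i ∈ T, μ i ^ 2 ≤ ∑ i, μ i ^ 2 * t i) :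
    (∀ i, θ < μ i → t i = 1) ∧ (∀ i, μ i < θ → t i = 0) ∧
      (∑ i, μ i * t i = ∑ i ∈ T, μ i) := by
  classical
  set ℓ : Fin n → ℝ := fun i => (μ i ^ 2 - θ ^ 2) * ((if i ∈ T then (1:ℝ) else 0) - t i) with hℓ
  have hℓnn : ∀ i, 0 ≤ ℓ i := by
    intro i
    by_cases hi : i ∈ T
    · have h1 := hθT i hi
      have h2 := ht1 i
      simp only [hℓ, hi, if_pos]
      have hsq : 0 ≤ μ i ^ 2 - θ ^ 2 := by nlinarith
      have := mul_nonneg hsq (by linarith : (0:ℝ) ≤ 1 - t i)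
      linarith [this]
    · have h1 := hθc i hi
      have h2 := ht0 i
      have h3 := hμ i
      simp only [hℓ, hi, if_neg, not_false_iff]
      have hrw : (μ i ^ 2 - θ ^ 2) * (0 - t i) = (θ ^ 2 - μ i ^ 2) * t i := by ring
      rw [hrw]
      have hsq : 0 ≤ θ ^ 2 - μ i ^ 2 := by nlinarith
      exact mul_nonneg hsq h2
  have hident : ∑ i, ℓ i =
      (∑ i ∈ T, μ i ^ 2) - θ ^ 2 * T.card - (∑ i, μ i ^ 2 * t i) + θ ^ 2 * ∑ i, t i := by
    have hpt : ∀ i, ℓ i = ((if i ∈ T then μ i ^ 2 else 0) - (if i ∈ T then θ ^ 2 else 0))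
        - μ i ^ 2 * t i + θ ^ 2 * t i := by
      intro i; by_cases hi : i ∈ T <;> simp [hℓ, hi] <;> ring
    rw [Finset.sum_congr rfl fun i _ => hpt i]
    rw [Finset.sum_add_distrib, Finset.sum_sub_distrib, Finset.sum_sub_distrib]
    congr 1
    · congr 1
      congr 1
      · rw [Finset.sum_ite_mem, Finset.univ_inter]
      · rw [Finset.sum_ite_mem, Finset.univ_inter, Finset.sum_const, nsmul_eq_mul]; ring
    · rw [Finset.mul_sum]
  have hslack : 0 ≤ θ ^ 2 * ((T.card : ℝ) - ∑ i, t i) := by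
    apply mul_nonneg (sq_nonneg θ); linarith
  have hsumℓ : ∑ i, ℓ i ≤ 0 := by rw [hident]; nlinarith
  have hℓzero : ∀ i, ℓ i = 0 := by
    intro i
    have h0 : ∑ i, ℓ i = 0 := le_antisymm hsumℓ (Finset.sum_nonneg fun i _ => hℓnn i)
    exact (Finset.sum_eq_zero_iff_of_nonneg (fun i _ => hℓnn i)).mp h0 i (Finset.mem_univ i)
  have hslack0 : θ ^ 2 * ((T.card : ℝ) - ∑ i, t i) = 0 := by
    have h0 : ∑ i, ℓ i = 0 := le_antisymm hsumℓ (Finset.sum_nonneg fun i _ => hℓnn i)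
    rw [hident] at h0
    nlinarith
  have c1 : ∀ i, θ < μ i → t i = 1 := by
    intro i hi
    have hiT : i ∈ T := by
      by_contra h
      exact absurd (hθc i h) (not_le.mpr hi)
    have := hℓzero i
    simp only [hℓ, hiT, if_pos] at this
    have hne : μ i ^ 2 - θ ^ 2 ≠ 0 := by nlinarith
    have := mul_eq_zero.mp this
    rcases this with h | h
    · exact absurd h hne
    · linarith
  have c2 : ∀ i, μ i < θ → t i = 0 := by
    intro i hi
    have hiT : i ∉ T := fun h => absurd (hθT i h) (not_le.mpr hi)
    have := hℓzero i
    simp only [hℓ, hiT, if_neg, not_false_iff] at this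
    have hμi := hμ i
    have hne : μ i ^ 2 - θ ^ 2 ≠ 0 := by nlinarith
    have := mul_eq_zero.mp this
    rcases this with h | h
    · exact absurd h hne
    · linarith
  refine ⟨c1, c2, ?_⟩
  -- trace equality
  set ℓ' : Fin n → ℝ := fun i => (μ i - θ) * ((if i ∈ T then (1:ℝ) else 0) - t i) with hℓ'
  have hℓ'zero : ∀ i, ℓ' i = 0 := by
    intro i
    rcases lt_trichotomy (μ i) θ with h | h | h
    · have hiT : i ∉ T := fun hh => absurd (hθT i hh) (not_le.mpr h)
      simp [hℓ', hiT, c2 i h]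
    · simp [hℓ', h]
    · have hiT : i ∈ T := by
        by_contra hh
        exact absurd (hθc i hh) (not_le.mpr h)
      simp [hℓ', hiT, c1 i h]
  have hident' : ∑ i, ℓ' i =
      (∑ i ∈ T, μ i) - θ * T.card - (∑ i, μ i * t i) + θ * ∑ i, t i := by
    have hpt : ∀ i, ℓ' i = ((if i ∈ T then μ i else 0) - (if i ∈ T then θ else 0))
        - μ i * t i + θ * t i := by
      intro i; by_cases hi : i ∈ T <;> simp [hℓ', hi] <;> ring
    rw [Finset.sum_congr rfl fun i _ => hpt i]
    rw [Finset.sum_add_distrib, Finset.sum_sub_distrib, Finset.sum_sub_distrib]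
    congr 1
    · congr 1
      congr 1
      · rw [Finset.sum_ite_mem, Finset.univ_inter]
      · rw [Finset.sum_ite_mem, Finset.univ_inter, Finset.sum_const, nsmul_eq_mul]; ring
    · rw [Finset.mul_sum]
  have hz : ∑ i, ℓ' i = 0 := Finset.sum_eq_zero fun i _ => hℓ'zero i
  have hθterm : θ * ((T.card : ℝ) - ∑ i, t i) = 0 := by
    rcases eq_or_ne θ 0 with h | h
    · rw [h]; ring
    · have : (T.card : ℝ) - ∑ i, t i = 0 := by
        have hθsq : θ ^ 2 ≠ 0 := pow_ne_zero 2 h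
        rcases mul_eq_zero.mp hslack0 with hh | hh
        · exact absurd hh hθsq
        · exact hh
      rw [this]; ring
  rw [hident'] at hz
  nlinarith [hθterm]

lemma exists_topset (μ : Fin n → ℝ) (k : ℕ) (hk : k ≤ n) :
    ∃ T : Finset (Fin n), T.card = k ∧ ∀ i ∈ T, ∀ j, j ∉ T → μ j ≤ μ i := by
  classical
  have hne : (Finset.univ.powersetCard k : Finset (Finset (Fin n))).Nonempty := by
    rw [Finset.powersetCard_nonempty, Finset.card_univ, Fintype.card_fin]
    exact hk
  obtain ⟨T, hT, hmax⟩ := Finset.exists_max_image _ (fun T => ∑ i ∈ T, μ i) hne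
  rw [Finset.mem_powersetCard] at hT
  refine ⟨T, hT.2, ?_⟩
  intro i hi j hj
  by_contra hlt
  push_neg at hlt
  set T' := insert j (T.erase i) with hT'
  have hjT' : j ∉ T.erase i := fun h => hj (Finset.mem_of_mem_erase h)
  have hcard : T'.card = k := by
    have hk1 : 1 ≤ k := hT.2 ▸ Finset.card_pos.mpr ⟨i, hi⟩
    rw [hT', Finset.card_insert_of_notMem hjT', Finset.card_erase_of_mem hi, hT.2]
    omega
  have hle : ∑ x ∈ T', μ x ≤ ∑ x ∈ T, μ x := by
    have hmem : T' ∈ Finset.univ.powersetCard k := by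
      rw [Finset.mem_powersetCard]
      exact ⟨Finset.subset_univ _, hcard⟩
    exact hmax T' hmem
  have hsum' : ∑ x ∈ T', μ x = μ j + ∑ x ∈ T.erase i, μ x := by
    rw [hT', Finset.sum_insert hjT']
  have hsum : ∑ x ∈ T, μ x = μ i + ∑ x ∈ T.erase i, μ x := by
    rw [Finset.add_sum_erase _ _ hi]
  rw [hsum', hsum] at hle
  linarith

end LP


lemma frobSq_diag {n : ℕ} (v : Fin n → ℝ) :
    frobSq (Matrix.diagonal v) = ∑ i, v i ^ 2 := by
  rw [frobSq, Matrix.diagonal_transpose, Matrix.diagonal_mul_diagonal, Matrix.trace_diagonal]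
  exact Finset.sum_congr rfl fun i _ => (sq (v i)).symm

lemma pythagoras {n : ℕ} (D G P : Matrix (Fin n) (Fin n) ℝ) (hDsym : Dᵀ = D)
    (hsym : Pᵀ = P) (hidem : P * P = P) (hPG : P * G = G) :
    frobSq (D - G) = frobSq (D - P * D) + frobSq (P * D - G) := by
  set X := D - P * D with hX
  set Y := P * D - G with hY
  have hXt : Xᵀ = D - D * P := by
    rw [hX, Matrix.transpose_sub, Matrix.transpose_mul, hDsym, hsym]
  have hXY : Xᵀ * Y = 0 := by
    rw [hXt, hY]
    have : (D - D * P) * (P * D - G) =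
        D * (P * D) - D * G - D * (P * P) * D + D * (P * G) := by noncomm_ring
    rw [this, hidem, hPG]
    noncomm_ring
  have hYX : Yᵀ * X = 0 := by
    have := congrArg Matrix.transpose hXY
    simpa [Matrix.transpose_mul] using this
  have hDG : D - G = X + Y := by rw [hX, hY]; noncomm_ring
  rw [hDG, frobSq, frobSq, frobSq]
  have hexp : (X + Y)ᵀ * (X + Y) = Xᵀ * X + Yᵀ * Y := by
    rw [Matrix.transpose_add, Matrix.add_mul, Matrix.mul_add, Matrix.mul_add, hXY, hYX]
    abel
  rw [hexp, Matrix.trace_add]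

lemma rank_zero_iff_gd {n : ℕ} {A : Matrix (Fin n) (Fin n) ℝ} (h : A.rank = 0) : A = 0 := by
  classical
  have h1 : LinearMap.range A.mulVecLin = ⊥ := by
    rw [Matrix.rank] at h
    exact Submodule.finrank_eq_zero.mp h
  ext i j
  have h2 : A.mulVecLin (Pi.single j 1) = 0 := by
    have : A.mulVecLin (Pi.single j 1) ∈ LinearMap.range A.mulVecLin :=
      LinearMap.mem_range_self _ _
    rw [h1] at this
    simpa using this
  have h3 := congrFun h2 i
  simpa [Matrix.mulVecLin_apply, Matrix.mulVec_single] using h3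

lemma diag_main {n r : ℕ} (μ : Fin n → ℝ) (hμ : ∀ i, 0 ≤ μ i)
    (Gd : Matrix (Fin n) (Fin n) ℝ) (hrank : Gd.rank ≤ r)
    (hmin : ∀ H : Matrix (Fin n) (Fin n) ℝ, H.rank ≤ r →
      frobSq (Matrix.diagonal μ - Gd) ≤ frobSq (Matrix.diagonal μ - H)) :
    (Matrix.diagonal μ - Gd).PosSemidef ∧
    ∀ B : Matrix (Fin n) (Fin n) ℝ, B.rank ≤ r →
      (Matrix.diagonal μ - B).PosSemidef → Matrix.trace B ≤ Matrix.trace Gd := by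
  classical
  set D := Matrix.diagonal μ with hD
  have hDsym : Dᵀ = D := Matrix.diagonal_transpose μ
  by_cases hr0 : r = 0
  · subst hr0
    have hGd0 : Gd = 0 := by
      have h0 : Gd.rank = 0 := by omega
      exact rank_zero_iff_gd h0
    constructor
    · rw [hGd0, sub_zero]
      exact Matrix.posSemidef_diagonal_iff.mpr hμ
    · intro B hB _
      have hB0 : B = 0 := by
        have h0 : B.rank = 0 := by omega
        exact rank_zero_iff_gd h0
      rw [hGd0, hB0]
  by_cases hn0 : n = 0
  · subst hn0
    have hpsd0 : ∀ A : Matrix (Fin 0) (Fin 0) ℝ, A.PosSemidef := by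
      intro A
      refine ⟨?_, fun x => ?_⟩
      · ext i j; exact i.elim0
      · rw [Finsupp.sum_fintype _ _ (by simp)]; simp
    refine ⟨hpsd0 _, fun B _ _ => ?_⟩
    simp [Matrix.trace]
  -- main case
  set k := min r n with hk
  have hkpos : 0 < k := by omega
  have hkn : k ≤ n := min_le_right r n
  obtain ⟨T, hTcard, hT⟩ := exists_topset μ k hkn
  have hTne : T.Nonempty := Finset.card_pos.mp (by omega)
  set θ := T.inf' hTne μ with hθ
  have hθT : ∀ i ∈ T, θ ≤ μ i := fun i hi => Finset.inf'_le μ hi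
  obtain ⟨i₀, hi₀T, hi₀⟩ := Finset.exists_mem_eq_inf' hTne μ
  have hθ0 : 0 ≤ θ := by rw [hθ, hi₀]; exact hμ i₀
  have hθc : ∀ j, j ∉ T → μ j ≤ θ := by
    intro j hj
    rw [hθ, hi₀]
    exact hT i₀ hi₀T j hj
  -- the greedy diagonal competitor
  set G₀ : Matrix (Fin n) (Fin n) ℝ := Matrix.diagonal (fun i => if i ∈ T then μ i else 0)
    with hG₀
  have hG₀rank : G₀.rank ≤ r := by
    rw [hG₀, Matrix.rank_diagonal]
    have h1 : Fintype.card {i // (if i ∈ T then μ i else 0) ≠ 0} =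
        (Finset.univ.filter fun i => (if i ∈ T then μ i else 0) ≠ 0).card :=
      Fintype.card_subtype _
    rw [h1]
    have h2 : (Finset.univ.filter fun i => (if i ∈ T then μ i else 0) ≠ 0) ⊆ T := by
      intro i hi
      rw [Finset.mem_filter] at hi
      by_contra h
      simp [h] at hi
    calc (Finset.univ.filter fun i => (if i ∈ T then μ i else 0) ≠ 0).card
        ≤ T.card := Finset.card_le_card h2
      _ = k := hTcard
      _ ≤ r := min_le_left r n
  have hDG₀ : frobSq (D - G₀) = ∑ i ∈ Tᶜ, μ i ^ 2 := by
    rw [hD, hG₀, Matrix.diagonal_sub, frobSq_diag]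
    have : ∀ i : Fin n, (μ i - if i ∈ T then μ i else 0) ^ 2 =
        if i ∈ Tᶜ then μ i ^ 2 else 0 := by
      intro i
      by_cases hi : i ∈ T <;> simp [hi]
    rw [Finset.sum_congr rfl fun i _ => this i, Finset.sum_ite_mem, Finset.univ_inter]
  obtain ⟨P, p, hPsym, hPidem, hPGd, hpr, hpn, hPtr⟩ := exists_proj Gd hrank
  set t : Fin n → ℝ := fun i => P i i with ht
  have ht0 : ∀ i, 0 ≤ t i := fun i => psd_diag_nonneg (proj_psd hPsym hPidem) i
  have ht1 : ∀ i, t i ≤ 1 := fun i => proj_diag_le_one hPsym hPidem i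
  have hts : ∑ i, t i ≤ (T.card : ℝ) := by
    have h1 : ∑ i, t i = Matrix.trace P := rfl
    rw [h1, hPtr, hTcard]
    exact_mod_cast le_min hpr hpn
  -- frobSq (D - P * D) = ∑ μ² - ∑ μ² t
  have htrDD : Matrix.trace (D * D) = ∑ i, μ i ^ 2 := by
    rw [hD, Matrix.diagonal_mul_diagonal, Matrix.trace_diagonal]
    exact Finset.sum_congr rfl fun i _ => (sq (μ i)).symm
  have htrDPD : Matrix.trace (D * P * D) = ∑ i, μ i ^ 2 * t i := by
    rw [Matrix.trace]
    refine Finset.sum_congr rfl fun i _ => ?_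
    rw [Matrix.diag]
    rw [show (D * P * D) i i = (D * P) i i * μ i from Matrix.mul_diagonal μ (D * P) i i]
    rw [show (D * P) i i = μ i * P i i from Matrix.diagonal_mul μ P i i]
    ring
  have hDPD : frobSq (D - P * D) = ∑ i, μ i ^ 2 - ∑ i, μ i ^ 2 * t i := by
    rw [frobSq]
    have h1 : (D - P * D)ᵀ = D - D * P := by
      rw [Matrix.transpose_sub, Matrix.transpose_mul, hDsym, hPsym]
    rw [h1]
    have h2 : (D - D * P) * (D - P * D) = D * D - D * P * D := by
      have : (D - D * P) * (D - P * D) =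
          D * D - D * (P * D) - D * P * D + D * (P * P) * D := by noncomm_ring
      rw [this, hPidem]
      noncomm_ring
    rw [h2, Matrix.trace_sub, htrDD, htrDPD]
  -- Claim A
  have hA : ∑ i, μ i ^ 2 * t i ≤ ∑ i ∈ T, μ i ^ 2 := by
    refine lp_max (fun i => μ i ^ 2) T (θ ^ 2) (sq_nonneg θ) ?_ ?_ t ht0 ht1 hts
    · intro i hi
      have h1 := hθT i hi
      show θ ^ 2 ≤ μ i ^ 2
      exact pow_le_pow_left₀ hθ0 h1 2
    · intro j hj
      have h1 := hθc j hj
      have h2 := hμ j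
      show μ j ^ 2 ≤ θ ^ 2
      exact pow_le_pow_left₀ h2 h1 2
  have hsplitμ : ∑ i, μ i ^ 2 = ∑ i ∈ T, μ i ^ 2 + ∑ i ∈ Tᶜ, μ i ^ 2 :=
    (Finset.sum_add_sum_compl T _).symm
  have hchain1 : frobSq (D - Gd) ≤ ∑ i ∈ Tᶜ, μ i ^ 2 := hDG₀ ▸ hmin G₀ hG₀rank
  have hpyth := pythagoras D Gd P hDsym hPsym hPidem hPGd
  have hYnn := frobSq_nonneg (P * D - Gd)
  have hPDGd0 : frobSq (P * D - Gd) ≤ 0 := by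
    rw [hpyth, hDPD] at hchain1
    linarith
  have hGdPD : Gd = P * D := by
    have := eq_zero_of_frobSq_le_zero hPDGd0
    have h2 : P * D - Gd = 0 := this
    linear_combination (norm := noncomm_ring) -h2
  have heq : ∑ i ∈ T, μ i ^ 2 ≤ ∑ i, μ i ^ 2 * t i := by
    rw [hpyth, hDPD] at hchain1
    linarith
  obtain ⟨c1, c2, ctr⟩ := eq_conditions μ hμ T θ hθ0 hθT hθc t ht0 ht1 hts heq
  -- PSD part
  set Q : Matrix (Fin n) (Fin n) ℝ := 1 - P with hQ
  obtain ⟨hQsym, hQidem⟩ := proj_compl hPsym hPidem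
  have hQentry : ∀ a b : Fin n, Q a b = (if a = b then (1:ℝ) else 0) - P a b := by
    intro a b
    rw [hQ, Matrix.sub_apply, Matrix.one_apply]
  have hQcol1 : ∀ i, θ < μ i → ∀ a, Q a i = 0 := by
    intro i hi a
    have hti : P i i = 1 := c1 i hi
    have hQii : Q i i = 0 := by
      rw [hQentry i i, hti]
      simp
    exact proj_col_zero hQsym hQidem hQii a
  have hPcol : ∀ i, μ i < θ → ∀ a, P a i = 0 := by
    intro i hi a
    have hPii : P i i = 0 := c2 i hi
    exact proj_col_zero hPsym hPidem hPii a
  set χs : Fin n → ℝ := fun i => if μ i = θ then Real.sqrt θ else 0 with hχs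
  set Sm : Matrix (Fin n) (Fin n) ℝ := Matrix.diagonal χs with hSm
  set Dlt : Matrix (Fin n) (Fin n) ℝ :=
    Matrix.diagonal (fun i => if μ i < θ then μ i else 0) with hDlt
  set D₀ : Matrix (Fin n) (Fin n) ℝ :=
    Matrix.diagonal (fun i => if μ i = θ then θ else 0) with hD₀
  have step1 : Q * D = Dlt + Q * D₀ := by
    ext a i
    rw [Matrix.add_apply]
    rw [show (Q * D) a i = Q a i * μ i from Matrix.mul_diagonal μ Q a i]
    rw [show (Q * D₀) a i = Q a i * (if μ i = θ then θ else 0) from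
      Matrix.mul_diagonal _ Q a i]
    rcases lt_trichotomy (μ i) θ with h | h | h
    · have hQai : Q a i = if a = i then (1:ℝ) else 0 := by
        rw [hQentry, hPcol i h a, sub_zero]
      rw [hQai, hDlt, Matrix.diagonal_apply]
      by_cases hai : a = i
      · subst hai
        rw [if_pos rfl, if_pos rfl, if_pos h, if_neg (ne_of_lt h)]
        ring
      · rw [if_neg hai, if_neg hai]
        ring
    · rw [hDlt, Matrix.diagonal_apply]
      by_cases hai : a = i
      · subst hai
        rw [if_pos rfl, if_neg (by rw [h]; exact lt_irrefl θ), if_pos h, h]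
        ring
      · rw [if_neg hai, if_pos h, h]
        ring
    · have hni : ¬ μ i < θ := not_lt_of_gt h
      have hne : ¬ μ i = θ := ne_of_gt h
      rw [hQcol1 i h a, hDlt, Matrix.diagonal_apply]
      by_cases hai : a = i
      · subst hai
        rw [if_pos rfl, if_neg hni, if_neg hne]
        ring
      · rw [if_neg hai, if_neg hne]
        ring
  have step2 : Q * D₀ = Sm * Q * Sm := by
    ext a i
    rw [show (Q * D₀) a i = Q a i * (if μ i = θ then θ else 0) from
      Matrix.mul_diagonal _ Q a i]
    rw [show (Sm * Q * Sm) a i = (Sm * Q) a i * χs i from Matrix.mul_diagonal _ _ a i]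
    rw [show (Sm * Q) a i = χs a * Q a i from Matrix.diagonal_mul _ _ a i]
    by_cases hi : μ i = θ
    · by_cases ha : μ a = θ
      · have hca : χs a = Real.sqrt θ := by simp only [hχs]; rw [if_pos ha]
        have hci : χs i = Real.sqrt θ := by simp only [hχs]; rw [if_pos hi]
        rw [hca, hci, if_pos hi,
          show Real.sqrt θ * Q a i * Real.sqrt θ = Real.sqrt θ * Real.sqrt θ * Q a i
            from by ring, Real.mul_self_sqrt hθ0]
        ring
      · have hQai : Q a i = 0 := by
          have hQs : Q a i = Q i a := by
            have := congrFun (congrFun hQsym a) i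
            exact this.symm
          rcases lt_trichotomy (μ a) θ with hh | hh | hh
          · have hP := hPcol a hh i
            rw [hQs, hQentry]
            have hia : i ≠ a := fun hcon => ha (hcon ▸ hi)
            simp [hia, hP]
          · exact absurd hh ha
          · rw [hQs]
            exact hQcol1 a hh i
        rw [hQai, hχs]
        simp [ha]
    · rw [hχs]
      simp [hi]
  have hDGd_eq : D - Gd = Dlt + Sm * Q * Sm := by
    rw [hGdPD, ← step2, ← step1, hQ]
    noncomm_ring
  have hpsd1 : (D - Gd).PosSemidef := by
    rw [hDGd_eq]
    refine Matrix.PosSemidef.add ?_ ?_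
    · rw [hDlt]
      refine Matrix.posSemidef_diagonal_iff.mpr fun i => ?_
      by_cases h : μ i < θ <;> simp [h, hμ i]
    · have hconj := (proj_psd hQsym hQidem).conjTranspose_mul_mul_same Sm
      have hSmH : Smᴴ = Sm := by
        show Smᵀ = Sm
        rw [hSm, Matrix.diagonal_transpose]
      rwa [hSmH] at hconj
  have htrGd : Matrix.trace Gd = ∑ i ∈ T, μ i := by
    rw [hGdPD, Matrix.trace]
    have : ∀ i, Matrix.diag (P * D) i = μ i * t i := by
      intro i
      rw [Matrix.diag]
      rw [show (P * D) i i = P i i * μ i from Matrix.mul_diagonal μ P i i]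
      ring
    rw [Finset.sum_congr rfl fun i _ => this i, ctr]
  refine ⟨hpsd1, ?_⟩
  intro B hBrank hDB
  obtain ⟨R, p', hRsym, hRidem, hRB, hp'r, hp'n, hRtr⟩ := exists_proj B hBrank
  have htB : Matrix.trace B = Matrix.trace (R * B) := by rw [hRB]
  have htRB_le : Matrix.trace (R * B) ≤ Matrix.trace (R * D) := by
    have h1 : Matrix.trace (R * D) - Matrix.trace (R * B) = Matrix.trace (R * (D - B)) := by
      rw [Matrix.mul_sub, Matrix.trace_sub]
    have h2 : Matrix.trace (R * (D - B)) = Matrix.trace (R * (D - B) * R) := by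
      conv_lhs => rw [← hRidem, Matrix.mul_assoc]
      rw [Matrix.trace_mul_comm R (R * (D - B))]
    have hpsd : (R * (D - B) * R).PosSemidef := by
      have := hDB.conjTranspose_mul_mul_same R
      have hRH : Rᴴ = R := by show Rᵀ = R; exact hRsym
      rwa [hRH] at this
    have h3 := psd_trace_nonneg hpsd
    linarith [h2 ▸ h3]
  have htRD : Matrix.trace (R * D) = ∑ i, μ i * R i i := by
    rw [Matrix.trace]
    refine Finset.sum_congr rfl fun i _ => ?_
    rw [Matrix.diag]
    rw [show (R * D) i i = R i i * μ i from Matrix.mul_diagonal μ R i i]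
    ring
  have hlp : ∑ i, μ i * R i i ≤ ∑ i ∈ T, μ i := by
    refine lp_max μ T θ hθ0 hθT (fun j hj => hθc j hj) (fun i => R i i)
      (fun i => psd_diag_nonneg (proj_psd hRsym hRidem) i)
      (fun i => proj_diag_le_one hRsym hRidem i) ?_
    have h1 : ∑ i, R i i = Matrix.trace R := rfl
    rw [h1, hRtr, hTcard]
    exact_mod_cast le_min hp'r hp'n
  rw [htB, htrGd]
  calc Matrix.trace (R * B) ≤ Matrix.trace (R * D) := htRB_le
    _ = ∑ i, μ i * R i i := htRD
    _ ≤ ∑ i ∈ T, μ i := hlp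

section Transport
variable {n : ℕ}

lemma conj_trace (V X : Matrix (Fin n) (Fin n) ℝ) (hV2 : V * Vᵀ = 1) :
    Matrix.trace (Vᵀ * X * V) = Matrix.trace X := by
  rw [Matrix.trace_mul_cycle, hV2, Matrix.one_mul]

lemma conj_rank (V X : Matrix (Fin n) (Fin n) ℝ) (hV1 : Vᵀ * V = 1) (hV2 : V * Vᵀ = 1) :
    (Vᵀ * X * V).rank = X.rank := by
  have hdV : IsUnit V.det := by
    have h : V.det * Vᵀ.det = 1 := by rw [← Matrix.det_mul, hV2, Matrix.det_one]
    exact IsUnit.of_mul_eq_one _ h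
  have hdVt : IsUnit Vᵀ.det := by
    have h : Vᵀ.det * V.det = 1 := by rw [← Matrix.det_mul, hV1, Matrix.det_one]
    exact IsUnit.of_mul_eq_one _ h
  rw [Matrix.rank_mul_eq_left_of_isUnit_det V (Vᵀ * X) hdV]
  exact Matrix.rank_mul_eq_right_of_isUnit_det Vᵀ X hdVt

lemma conj_frobSq (V X : Matrix (Fin n) (Fin n) ℝ) (hV2 : V * Vᵀ = 1) :
    frobSq (Vᵀ * X * V) = frobSq X := by
  rw [frobSq, frobSq]
  have key : (Vᵀ * X * V)ᵀ = Vᵀ * Xᵀ * V := by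
    rw [Matrix.transpose_mul, Matrix.transpose_mul, Matrix.transpose_transpose]
    noncomm_ring
  rw [key]
  have h2 : Vᵀ * Xᵀ * V * (Vᵀ * X * V) = Vᵀ * (Xᵀ * (V * Vᵀ) * X) * V := by noncomm_ring
  have h3 : Xᵀ * (V * Vᵀ) * X = Xᵀ * X := by rw [hV2, Matrix.mul_one]
  rw [h2, h3, conj_trace V (Xᵀ * X) hV2]

lemma conj_psd (V X : Matrix (Fin n) (Fin n) ℝ) (hX : X.PosSemidef) :
    (Vᵀ * X * V).PosSemidef := by
  have h := hX.conjTranspose_mul_mul_same V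
  exact h

end Transport


/-- Theorem 1: the modified (QR-based) rank-r Nyström approximation is at least as accurate as
the standard rank-r Nyström approximation in the trace norm. -/
theorem stmt_6 {n m r : ℕ} (hrm : r ≤ m)
    (K : Matrix (Fin n) (Fin n) ℝ) (hK : K.PosSemidef)
    (P : Matrix (Fin n) (Fin m) ℝ)
    (C : Matrix (Fin n) (Fin m) ℝ) (W : Matrix (Fin m) (Fin m) ℝ)
    (hC : C = K * P) (hW : W = Pᵀ * K * P) (hWinv : IsUnit W)
    -- singular value decomposition K^{1/2} P = F S Nᵀ, positive nonincreasing singular values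
    (F : Matrix (Fin n) (Fin m) ℝ) (N : Matrix (Fin m) (Fin m) ℝ) (s : Fin m → ℝ)
    (hF : Fᵀ * F = 1) (hN : Nᵀ * N = 1) (hs : ∀ i, 0 < s i) (hmono : Antitone s)
    (hSVD : hK.sqrt * P = F * Matrix.diagonal s * Nᵀ)
    -- the standard rank-r Nyström approximation G_nys = C (N_r S_r⁻² N_rᵀ) Cᵀ
    (Gnys : Matrix (Fin n) (Fin n) ℝ)
    (hGnys : Gnys = C * (N.submatrix id (Fin.castLE hrm) *
        Matrix.diagonal (fun i : Fin r => (s (Fin.castLE hrm i) ^ 2)⁻¹) *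
        (N.submatrix id (Fin.castLE hrm))ᵀ) * Cᵀ)
    -- G_opt is any best rank-r Frobenius-norm approximation of C W⁻¹ Cᵀ
    (Gopt : Matrix (Fin n) (Fin n) ℝ) (hGoptRank : Gopt.rank ≤ r)
    (hGopt : ∀ G : Matrix (Fin n) (Fin n) ℝ, G.rank ≤ r →
      frobNorm (C * W⁻¹ * Cᵀ - Gopt) ≤ frobNorm (C * W⁻¹ * Cᵀ - G)) :
    (K - Gopt).PosSemidef ∧ (K - Gnys).PosSemidef ∧
    Matrix.trace (K - Gopt) ≤ Matrix.trace (K - Gnys) := by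
    classical
  set A := hK.sqrt with hA
  have hA2 : A * A = K := psqrt_mul_self hK
  have hApsd : A.PosSemidef := psqrt_psd hK
  have hAsym : Aᵀ = A := hApsd.1
  set S : Matrix (Fin m) (Fin m) ℝ := Matrix.diagonal s with hS
  have hSsym : Sᵀ = S := Matrix.diagonal_transpose s
  have hsne : ∀ i, s i ^ 2 ≠ 0 := fun i => pow_ne_zero 2 (ne_of_gt (hs i))
  have hNN : N * Nᵀ = 1 := mul_eq_one_comm.mp hN
  -- reduction lemmas
  have hNred : ∀ (α : Type) [Fintype α] (X : Matrix (Fin m) α ℝ), Nᵀ * (N * X) = X := by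
    intro α _ X
    rw [← Matrix.mul_assoc, hN, Matrix.one_mul]
  have hFred : ∀ (α : Type) [Fintype α] (X : Matrix (Fin m) α ℝ), Fᵀ * (F * X) = X := by
    intro α _ X
    rw [← Matrix.mul_assoc, hF, Matrix.one_mul]
  -- W = N S² Nᵀ
  have hAPt : (A * P)ᵀ * (A * P) = Pᵀ * K * P := by
    rw [Matrix.transpose_mul, hAsym, ← hA2]
    simp only [Matrix.mul_assoc]
  have hSS : (fun i => s i * s i) = fun i => s i ^ 2 := funext fun i => (sq (s i)).symm
  have hW2 : W = N * Matrix.diagonal (fun i => s i ^ 2) * Nᵀ := by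
    rw [hW, ← hAPt, hSVD]
    have h1 : (F * S * Nᵀ)ᵀ = N * S * Fᵀ := by
      simp only [Matrix.transpose_mul, Matrix.transpose_transpose, hSsym, Matrix.mul_assoc]
    rw [h1]
    simp only [Matrix.mul_assoc]
    rw [hFred]
    rw [show S * (S * Nᵀ) = Matrix.diagonal (fun i => s i ^ 2) * Nᵀ from by
      rw [← Matrix.mul_assoc, hS, Matrix.diagonal_mul_diagonal, hSS]]
  -- W⁻¹
  have hWinveq : W⁻¹ = N * Matrix.diagonal (fun i => (s i ^ 2)⁻¹) * Nᵀ := by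
    apply Matrix.inv_eq_right_inv
    rw [hW2]
    simp only [Matrix.mul_assoc]
    rw [hNred]
    rw [show Matrix.diagonal (fun i => s i ^ 2) * (Matrix.diagonal (fun i => (s i ^ 2)⁻¹) * Nᵀ)
        = Nᵀ from by
      rw [← Matrix.mul_assoc, Matrix.diagonal_mul_diagonal,
        show (fun i => s i ^ 2 * (s i ^ 2)⁻¹) = fun _ : Fin m => (1:ℝ) from
          funext fun i => mul_inv_cancel₀ (hsne i), Matrix.diagonal_one, Matrix.one_mul]]
    exact hNN
  -- C and Cᵀ
  have hC2 : C = A * (F * S * Nᵀ) := by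
    rw [hC, ← hA2, Matrix.mul_assoc, hSVD]
  have hCt : Cᵀ = N * S * (Fᵀ * A) := by
    rw [hC2]
    simp only [Matrix.transpose_mul, Matrix.transpose_transpose, hSsym, hAsym, Matrix.mul_assoc]
  -- M = A (F Fᵀ) A
  have hSred : ∀ (α : Type) [Fintype α] (X : Matrix (Fin m) α ℝ),
      S * (Matrix.diagonal (fun i => (s i ^ 2)⁻¹) * (S * X)) = X := by
    intro α _ X
    rw [← Matrix.mul_assoc, ← Matrix.mul_assoc, hS, Matrix.diagonal_mul_diagonal,
      Matrix.diagonal_mul_diagonal,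
      show (fun i => s i * (s i ^ 2)⁻¹ * s i) = fun _ : Fin m => (1:ℝ) from funext fun i => by
        rw [show s i * (s i ^ 2)⁻¹ * s i = s i ^ 2 * (s i ^ 2)⁻¹ from by ring,
          mul_inv_cancel₀ (hsne i)],
      Matrix.diagonal_one, Matrix.one_mul]
  have hM : C * W⁻¹ * Cᵀ = A * (F * Fᵀ) * A := by
    rw [hCt, hC2, hWinveq]
    simp only [Matrix.mul_assoc]
    rw [hNred, hNred, hSred]
  -- Gnys = A (F E Fᵀ) A
  set c : Fin r → Fin m := Fin.castLE hrm with hc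
  set Nr : Matrix (Fin m) (Fin r) ℝ := N.submatrix id c with hNr
  set J : Matrix (Fin m) (Fin r) ℝ := (1 : Matrix (Fin m) (Fin m) ℝ).submatrix id c with hJdef
  have hJ : ∀ (a : Fin m) (b : Fin r), J a b = if a = c b then (1:ℝ) else 0 := by
    intro a b
    rw [hJdef]
    simp [Matrix.submatrix_apply, Matrix.one_apply]
  have hNtNr : Nᵀ * Nr = J := by
    ext i j
    have h1 : (Nᵀ * Nr) i j = (Nᵀ * N) i (c j) := by
      rw [hNr]
      simp [Matrix.mul_apply, Matrix.submatrix_apply]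
    rw [h1, hN, hJ]
    rfl
  have hNrtN : Nrᵀ * N = Jᵀ := by
    have h := congrArg Matrix.transpose hNtNr
    simpa [Matrix.transpose_mul, Matrix.transpose_transpose] using h
  set dr : Fin r → ℝ := fun i => (s (c i) ^ 2)⁻¹ with hdr
  set χ : Fin m → ℝ := fun i => if (i : ℕ) < r then (1:ℝ) else 0 with hχ
  set E : Matrix (Fin m) (Fin m) ℝ := Matrix.diagonal χ with hE
  have hJdJ : J * Matrix.diagonal dr * Jᵀ =
      Matrix.diagonal (fun i : Fin m => if h : (i : ℕ) < r then dr ⟨i, h⟩ else 0) := by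
    ext i k
    have h2 : ∀ j, (J * Matrix.diagonal dr) i j = J i j * dr j :=
      fun j => Matrix.mul_diagonal dr J i j
    rw [Matrix.mul_apply, Finset.sum_congr rfl fun j _ => by
      rw [h2 j, Matrix.transpose_apply], Matrix.diagonal_apply]
    by_cases hi : (i : ℕ) < r
    · have hcj₀ : c ⟨(i : ℕ), hi⟩ = i := by
        rw [hc]
        exact Fin.ext rfl
      rw [Finset.sum_eq_single ⟨(i : ℕ), hi⟩]
      · rw [hJ i _, hJ k _, hcj₀, if_pos rfl]
        by_cases hk : k = i
        · rw [if_pos hk, if_pos hk.symm, dif_pos hi]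
          ring
        · rw [if_neg hk, if_neg (fun hik => hk hik.symm)]
          ring
      · intro j _ hj
        have hne : i ≠ c j := by
          intro hcon
          apply hj
          apply Fin.ext
          have : (c j : ℕ) = (j : ℕ) := rfl
          simp [← this, ← hcon]
        rw [hJ i j, if_neg hne]
        ring
      · intro h
        exact absurd (Finset.mem_univ _) h
    · have hz : ∀ j : Fin r, J i j = 0 := by
        intro j
        rw [hJ i j, if_neg]
        intro hcon
        apply hi
        rw [hcon]
        exact j.isLt
      rw [Finset.sum_eq_zero fun j _ => by rw [hz j]; ring]
      by_cases hk : i = k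
      · rw [if_pos hk, dif_neg hi]
      · rw [if_neg hk]
  have hmid : S * (J * Matrix.diagonal dr * Jᵀ) * S = E := by
    rw [hJdJ, hS, Matrix.diagonal_mul_diagonal, Matrix.diagonal_mul_diagonal, hE]
    have hfun : (fun i => (s i * if h : (i : ℕ) < r then dr ⟨i, h⟩ else 0) * s i) = χ := by
      funext i
      simp only [hχ]
      by_cases hi : (i : ℕ) < r
      · have hci : c ⟨(i : ℕ), hi⟩ = i := by rw [hc]; exact Fin.ext rfl
        have hdri : dr ⟨(i : ℕ), hi⟩ = (s i ^ 2)⁻¹ := by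
          simp only [hdr]
          rw [hci]
        rw [dif_pos hi, if_pos hi, hdri,
          show s i * (s i ^ 2)⁻¹ * s i = s i ^ 2 * (s i ^ 2)⁻¹ from by ring,
          mul_inv_cancel₀ (hsne i)]
      · rw [dif_neg hi, if_neg hi, mul_zero, zero_mul]
    rw [hfun]
  have hGnys2 : Gnys = A * F * E * (Fᵀ * A) := by
    rw [hGnys, hCt, hC2]
    simp only [Matrix.mul_assoc]
    rw [show Nᵀ * (Nr * (Matrix.diagonal dr * (Nrᵀ * (N * (S * (Fᵀ * A)))))) =
        J * (Matrix.diagonal dr * (Jᵀ * (S * (Fᵀ * A)))) from by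
      rw [← Matrix.mul_assoc Nᵀ Nr _, hNtNr, ← Matrix.mul_assoc Nrᵀ N _, hNrtN]]
    rw [show S * (J * (Matrix.diagonal dr * (Jᵀ * (S * (Fᵀ * A))))) = E * (Fᵀ * A) from by
      rw [show S * (J * (Matrix.diagonal dr * (Jᵀ * (S * (Fᵀ * A))))) =
        (S * (J * Matrix.diagonal dr * Jᵀ) * S) * (Fᵀ * A) from by
          simp only [Matrix.mul_assoc], hmid]]
  -- rank of Gnys
  have hGnysRank : Gnys.rank ≤ r := by
    have h1 : Gnys = (C * Nr) * (Matrix.diagonal dr * (Nrᵀ * Cᵀ)) := by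
      rw [hGnys]
      simp only [Matrix.mul_assoc]
    rw [h1]
    calc ((C * Nr) * (Matrix.diagonal dr * (Nrᵀ * Cᵀ))).rank
        ≤ (C * Nr).rank := Matrix.rank_mul_le_left _ _
      _ ≤ Fintype.card (Fin r) := Matrix.rank_le_card_width _
      _ = r := Fintype.card_fin r
  -- PSD facts
  have hconjA : ∀ X : Matrix (Fin n) (Fin n) ℝ, X.PosSemidef → (A * X * A).PosSemidef := by
    intro X hX
    have h := hX.conjTranspose_mul_mul_same A
    have h2 : Aᴴ = A := hAsym
    rwa [h2] at h
  have hFFt_sym : (F * Fᵀ)ᵀ = F * Fᵀ := by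
    rw [Matrix.transpose_mul, Matrix.transpose_transpose]
  have hFFt_idem : (F * Fᵀ) * (F * Fᵀ) = F * Fᵀ := by
    simp only [Matrix.mul_assoc]
    rw [hFred]
  have hMpsd : (C * W⁻¹ * Cᵀ).PosSemidef := by
    rw [hM]
    exact hconjA _ (proj_psd hFFt_sym hFFt_idem)
  have hKM : (K - C * W⁻¹ * Cᵀ).PosSemidef := by
    have heqn : K - C * W⁻¹ * Cᵀ = A * (1 - F * Fᵀ) * A := by
      rw [hM, ← hA2]
      noncomm_ring
    rw [heqn]
    obtain ⟨h1, h2⟩ := proj_compl hFFt_sym hFFt_idem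
    exact hconjA _ (proj_psd h1 h2)
  have hMGnys : (C * W⁻¹ * Cᵀ - Gnys).PosSemidef := by
    have hEpsd : ((1 : Matrix (Fin m) (Fin m) ℝ) - E).PosSemidef := by
      have h1 : (1 : Matrix (Fin m) (Fin m) ℝ) - E = Matrix.diagonal (fun i => 1 - χ i) := by
        rw [hE, ← Matrix.diagonal_one, Matrix.diagonal_sub]
      rw [h1]
      refine Matrix.posSemidef_diagonal_iff.mpr fun i => ?_
      rw [hχ]
      by_cases hi : (i : ℕ) < r <;> simp [hi]
    have hpsd := hEpsd.mul_mul_conjTranspose_same (A * F)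
    have hAFt : (A * F)ᴴ = Fᵀ * A := by
      show (A * F)ᵀ = Fᵀ * A
      rw [Matrix.transpose_mul, hAsym]
    rw [hAFt] at hpsd
    have heqn : C * W⁻¹ * Cᵀ - Gnys = (A * F) * (1 - E) * (Fᵀ * A) := by
      rw [hM, hGnys2]
      simp only [Matrix.mul_sub, Matrix.sub_mul, Matrix.mul_one, Matrix.one_mul,
        Matrix.mul_assoc]
    rw [heqn]
    exact hpsd
  -- spectral decomposition of M
  have hMH : (C * W⁻¹ * Cᵀ).IsHermitian := hMpsd.1
  set V : Matrix (Fin n) (Fin n) ℝ := (hMH.eigenvectorUnitary : Matrix (Fin n) (Fin n) ℝ)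
    with hV
  set μ : Fin n → ℝ := hMH.eigenvalues with hμdef
  have hμ0 : ∀ i, 0 ≤ μ i := hMpsd.eigenvalues_nonneg
  have hVmem := hMH.eigenvectorUnitary.prop
  rw [Unitary.mem_iff] at hVmem
  have hV1 : Vᵀ * V = 1 := hVmem.1
  have hV2 : V * Vᵀ = 1 := hVmem.2
  have hspec : C * W⁻¹ * Cᵀ = V * Matrix.diagonal μ * Vᵀ := by
      conv_lhs => rw [hMH.spectral_theorem]
      rw [Unitary.conjStarAlgAut_apply]
      rfl
  have hVMV : Vᵀ * (C * W⁻¹ * Cᵀ) * V = Matrix.diagonal μ := by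
    rw [hspec]
    calc Vᵀ * (V * Matrix.diagonal μ * Vᵀ) * V
        = (Vᵀ * V) * (Matrix.diagonal μ * (Vᵀ * V)) := by simp only [Matrix.mul_assoc]
      _ = Matrix.diagonal μ := by rw [hV1, Matrix.one_mul, Matrix.mul_one]
  have hback : ∀ X : Matrix (Fin n) (Fin n) ℝ, V * (Vᵀ * X * V) * Vᵀ = X := by
    intro X
    calc V * (Vᵀ * X * V) * Vᵀ = (V * Vᵀ) * (X * (V * Vᵀ)) := by simp only [Matrix.mul_assoc]
      _ = X := by rw [hV2, Matrix.one_mul, Matrix.mul_one]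
  set Gd : Matrix (Fin n) (Fin n) ℝ := Vᵀ * Gopt * V with hGd
  have hGdrank : Gd.rank ≤ r := by
    rw [hGd, conj_rank V Gopt hV1 hV2]
    exact hGoptRank
  have hmin' : ∀ H : Matrix (Fin n) (Fin n) ℝ, H.rank ≤ r →
      frobSq (Matrix.diagonal μ - Gd) ≤ frobSq (Matrix.diagonal μ - H) := by
    intro H hH
    have hHrank : (V * H * Vᵀ).rank ≤ r := by
      have h := conj_rank Vᵀ H (by rw [Matrix.transpose_transpose]; exact hV2)
        (by rw [Matrix.transpose_transpose]; exact hV1)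
      rw [Matrix.transpose_transpose] at h
      rw [h]
      exact hH
    have h1 := frobSq_le_of_frobNorm_le (hGopt (V * H * Vᵀ) hHrank)
    have h3 : frobSq (Matrix.diagonal μ - Gd) = frobSq (C * W⁻¹ * Cᵀ - Gopt) := by
      have hdiff : Matrix.diagonal μ - Gd = Vᵀ * (C * W⁻¹ * Cᵀ - Gopt) * V := by
        rw [Matrix.mul_sub, Matrix.sub_mul, hVMV, hGd]
      rw [hdiff, conj_frobSq _ _ hV2]
    have h4 : frobSq (C * W⁻¹ * Cᵀ - V * H * Vᵀ) = frobSq (Matrix.diagonal μ - H) := by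
      have h5 : Vᵀ * (C * W⁻¹ * Cᵀ - V * H * Vᵀ) * V = Matrix.diagonal μ - H := by
        rw [Matrix.mul_sub, Matrix.sub_mul, hVMV]
        congr 1
        calc Vᵀ * (V * H * Vᵀ) * V = (Vᵀ * V) * (H * (Vᵀ * V)) := by
              simp only [Matrix.mul_assoc]
          _ = H := by rw [hV1, Matrix.one_mul, Matrix.mul_one]
      rw [← h5, conj_frobSq _ _ hV2]
    rw [h3, ← h4]
    exact h1
  obtain ⟨hpsdD, htrD⟩ := diag_main μ hμ0 Gd hGdrank hmin'
  have hMGopt : (C * W⁻¹ * Cᵀ - Gopt).PosSemidef := by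
    have h1 : C * W⁻¹ * Cᵀ - Gopt = V * (Matrix.diagonal μ - Gd) * Vᵀ := by
      rw [Matrix.mul_sub, Matrix.sub_mul, hGd, hback Gopt, ← hspec]
    rw [h1]
    have h2 := hpsdD.mul_mul_conjTranspose_same V
    have h3 : Vᴴ = Vᵀ := rfl
    rwa [h3] at h2
  refine ⟨?_, ?_, ?_⟩
  · have h := hKM.add hMGopt
    rwa [sub_add_sub_cancel] at h
  · have h := hKM.add hMGnys
    rwa [sub_add_sub_cancel] at h
  · have hBpsd : (Matrix.diagonal μ - Vᵀ * Gnys * V).PosSemidef := by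
      have h1 : Matrix.diagonal μ - Vᵀ * Gnys * V = Vᵀ * (C * W⁻¹ * Cᵀ - Gnys) * V := by
        rw [Matrix.mul_sub, Matrix.sub_mul, hVMV]
      rw [h1]
      exact conj_psd V _ hMGnys
    have hBrank : (Vᵀ * Gnys * V).rank ≤ r := by
      rw [conj_rank V Gnys hV1 hV2]
      exact hGnysRank
    have htr := htrD (Vᵀ * Gnys * V) hBrank hBpsd
    have h1 : Matrix.trace Gnys ≤ Matrix.trace Gopt := by
      rw [← conj_trace V Gnys hV2, ← conj_trace V Gopt hV2]
      exact htr
    rw [Matrix.trace_sub, Matrix.trace_sub]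
    linarith
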